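/- Let R be a commutative Bézout ring. Then R is zero-adequate if and only if R is semiregular (i.e., R/J(R) is von Neumann regular and idempotents lift modulo J(R)). -/
import Mathlib


open Ideal

/-- The Jacobson radical of a commutative ring, as an ideal. -/
abbrev jacR (R : Type*) [CommRing R] : Ideal R := (⊥ : Ideal R).jacobson

/-- An element `c` is adequate. -/
def Adequate {R : Type*} [CommRing R] (c : R) : Prop :=
  ∀ a : R, ∃ r s : R, c = r * s ∧ (∃ x y : R, r * x + a * y = 1) ∧
    ∀ s' : R, s' ∣ s → ¬IsUnit s' → ¬∃ x y : R, s' * x + a * y = 1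

/-- An element `c` is feckly adequate. -/
def FecklyAdequate {R : Type*} [CommRing R] (c : R) : Prop :=
  ∀ a : R, ∃ r s : R, c - r * s ∈ jacR R ∧ (∃ x y : R, r * x + a * y = 1) ∧
    ∀ s' : R, s' ∣ s → ¬IsUnit s' → ¬∃ x y : R, s' * x + a * y = 1

/-- Feckly zero-adequate: for every `a` there are `r, s` with `r*s ∈ J(R)`,
`rR + aR = R`, and `s'R + aR ≠ R` for every non-invertible divisor `s'` of `s`. -/
def FecklyZeroAdequateBody (R : Type*) [CommRing R] : Prop :=
  ∀ a : R, ∃ r s : R, r * s ∈ jacR R ∧ (∃ x y : R, r * x + a * y = 1) ∧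
    ∀ s' : R, s' ∣ s → ¬IsUnit s' → ¬∃ x y : R, s' * x + a * y = 1

/-- Zero-adequate body: same with `r*s = 0`. -/
def ZeroAdequateBody (R : Type*) [CommRing R] : Prop :=
  ∀ a : R, ∃ r s : R, r * s = 0 ∧ (∃ x y : R, r * x + a * y = 1) ∧
    ∀ s' : R, s' ∣ s → ¬IsUnit s' → ¬∃ x y : R, s' * x + a * y = 1

/-- A feckly zero-adequate ring is a Bézout ring whose zero is feckly adequate. -/
def FecklyZeroAdequateRing (R : Type*) [CommRing R] : Prop :=
  IsBezout R ∧ FecklyZeroAdequateBody R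

/-- π-regularity. -/
def PiRegular (S : Type*) [CommRing S] : Prop :=
  ∀ a : S, ∃ n : ℕ, 1 ≤ n ∧ ∃ b : S, a ^ n = a ^ n * b * a ^ n

/-- von Neumann regularity. -/
def VNRegular (S : Type*) [CommRing S] : Prop :=
  ∀ a : S, ∃ b : S, a = a * b * a

/-- Idempotents lift modulo the Jacobson radical. -/
def IdempotentsLift (R : Type*) [CommRing R] : Prop :=
  ∀ x : R, x - x ^ 2 ∈ jacR R → ∃ e : R, e * e = e ∧ e - x ∈ jacR R

section Aux

variable {R : Type*} [CommRing R]

lemma mem_jacR_iff {x : R} : x ∈ jacR R ↔ ∀ M : Ideal R, M.IsMaximal → x ∈ M := by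
  simp only [Ideal.jacobson, Ideal.mem_sInf, Set.mem_setOf_eq, bot_le, true_and]

lemma unit_of_sub_one_mem {u : R} (h : u - 1 ∈ jacR R) : IsUnit u := by
  have := Ideal.mem_jacobson_bot.mp h 1
  simpa using this

/-- If `s ∈ M`, `a` has an "inverse mod M" and the adequacy condition on divisors
of `s` holds, we reach a contradiction. -/
lemma key_contra [IsBezout R] {a s : R}
    (scond : ∀ s' : R, s' ∣ s → ¬IsUnit s' → ¬∃ x y : R, s' * x + a * y = 1)
    {M : Ideal R} (hM : M.IsMaximal) (hs : s ∈ M) {i z : R} (hi : i ∈ M)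
    (hz : z * a + i = 1) : False := by
  obtain ⟨d, hd⟩ := IsBezout.iff_span_pair_isPrincipal.mp (inferInstance) s i
  rw [Ideal.submodule_span_eq] at hd
  have hsd : s ∈ Ideal.span {d} := by
    rw [← hd]; exact Ideal.subset_span (by simp)
  have hid : i ∈ Ideal.span {d} := by
    rw [← hd]; exact Ideal.subset_span (by simp)
  have hds : d ∣ s := Ideal.mem_span_singleton.mp hsd
  obtain ⟨t, ht⟩ := Ideal.mem_span_singleton.mp hid
  have hcom : ∃ x y : R, d * x + a * y = 1 := ⟨t, z, by rw [ht] at hz; linear_combination hz⟩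
  have hu : IsUnit d := by
    by_contra h
    exact scond d hds h hcom
  have hdM : d ∈ M := by
    have : d ∈ Ideal.span ({s, i} : Set R) := by
      rw [hd]; exact Ideal.subset_span (by simp)
    obtain ⟨p, q, hpq⟩ := Submodule.mem_span_pair.mp this
    rw [← hpq]
    exact M.add_mem (M.mul_mem_left p hs) (M.mul_mem_left q hi)
  exact hM.ne_top (M.eq_top_of_isUnit_mem hdM hu)

lemma lemA [IsBezout R] {a r s : R} (h0 : r * s = 0)
    (scond : ∀ s' : R, s' ∣ s → ¬IsUnit s' → ¬∃ x y : R, s' * x + a * y = 1) :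
    a * r ∈ jacR R := by
  rw [mem_jacR_iff]
  intro M hM
  have hMp : M.IsPrime := hM.isPrime
  by_cases ha : a ∈ M
  · exact M.mul_mem_right r ha
  by_cases hr : r ∈ M
  · exact M.mul_mem_left a hr
  exfalso
  have hsM : s ∈ M := by
    have : r * s ∈ M := h0 ▸ M.zero_mem
    rcases hMp.mem_or_mem this with h | h
    · exact absurd h hr
    · exact h
  obtain ⟨z, i, hi, hz⟩ := hM.exists_inv ha
  exact key_contra scond hM hsM hi hz

end Aux

theorem stmt8 (R : Type*) [CommRing R] [IsBezout R] :
    ZeroAdequateBody R ↔ VNRegular (R ⧸ jacR R) ∧ IdempotentsLift R := by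
  constructor
  · intro hza
    constructor
    · -- VN regularity of the quotient
      intro abar
      obtain ⟨a, rfl⟩ := Ideal.Quotient.mk_surjective abar
      obtain ⟨r, s, h0, ⟨x, y, hxy⟩, scond⟩ := hza a
      have har : a * r ∈ jacR R := lemA h0 scond
      refine ⟨Ideal.Quotient.mk _ y, ?_⟩
      have h2 : a - a * y * a ∈ jacR R := by
        have : a - a * y * a = (a * r) * x := by linear_combination (-a) * hxy
        rw [this]
        exact Ideal.mul_mem_right x _ har
      exact (Ideal.Quotient.eq.mpr h2).trans
        (by rw [_root_.map_mul, _root_.map_mul])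
    · -- idempotents lift
      intro x0 hx0
      obtain ⟨r, s, h0, ⟨p0, q0, hpq0⟩, scond⟩ := hza x0
      have har : x0 * r ∈ jacR R := lemA h0 scond
      -- span {r, s} = ⊤
      have hrs : ∃ p q : R, p * r + q * s = 1 := by
        by_contra hcon
        have hne : Ideal.span ({r, s} : Set R) ≠ ⊤ := by
          intro htop
          have : (1 : R) ∈ Ideal.span ({r, s} : Set R) := htop ▸ Submodule.mem_top
          obtain ⟨p, q, hpq⟩ := Submodule.mem_span_pair.mp this
          exact hcon ⟨p, q, hpq⟩
        obtain ⟨M, hM, hle⟩ := Ideal.exists_le_maximal _ hne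
        have hrM : r ∈ M := hle (Ideal.subset_span (by simp))
        have hsM : s ∈ M := hle (Ideal.subset_span (by simp))
        have hx0M : x0 ∉ M := by
          intro hx
          exact hM.ne_top (Ideal.eq_top_of_isUnit_mem M
            (show r * p0 + x0 * q0 ∈ M from
              M.add_mem (M.mul_mem_right p0 hrM) (M.mul_mem_right q0 hx))
            (hpq0 ▸ isUnit_one))
        have h1x0 : (1 : R) - x0 ∈ M := by
          have hmem : x0 * (1 - x0) ∈ M := by
            have : x0 * (1 - x0) = x0 - x0 ^ 2 := by ring
            rw [this]
            exact mem_jacR_iff.mp hx0 M hM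
          rcases hM.isPrime.mem_or_mem hmem with h | h
          · exact absurd h hx0M
          · exact h
        exact key_contra (z := 1) scond hM hsM h1x0 (by ring)
      obtain ⟨p, q, hpq⟩ := hrs
      refine ⟨q * s, ?_, ?_⟩
      · linear_combination (q * s) * hpq - (q * p) * h0
      · rw [mem_jacR_iff]
        intro M hM
        by_cases hx : x0 ∈ M
        · -- q*s ∈ M since s = x0 * (s * q0)
          have hs : s ∈ M := by
            have : s = x0 * (s * q0) := by linear_combination (- s) * hpq0 + p0 * h0
            rw [this]
            exact M.mul_mem_right _ hx
          exact M.sub_mem (M.mul_mem_left q hs) hx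
        · have hrM : r ∈ M := by
            have := mem_jacR_iff.mp har M hM
            rcases hM.isPrime.mem_or_mem this with h | h
            · exact absurd h hx
            · exact h
          have h1x0 : (1 : R) - x0 ∈ M := by
            have hmem : x0 * (1 - x0) ∈ M := by
              have : x0 * (1 - x0) = x0 - x0 ^ 2 := by ring
              rw [this]
              exact mem_jacR_iff.mp hx0 M hM
            rcases hM.isPrime.mem_or_mem hmem with h | h
            · exact absurd h hx
            · exact h
          have : q * s - x0 = (1 - x0) - (p * r) := by linear_combination hpq
          rw [this]
          exact M.sub_mem h1x0 (M.mul_mem_left p hrM)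
  · rintro ⟨hreg, hlift⟩
    intro a
    obtain ⟨bbar, hb⟩ := hreg (Ideal.Quotient.mk _ a)
    obtain ⟨b, rfl⟩ := Ideal.Quotient.mk_surjective bbar
    have h1 : a - a * b * a ∈ jacR R := by
      refine Ideal.Quotient.eq.mp ?_
      rw [hb, _root_.map_mul, _root_.map_mul]
    have hf : a * b - (a * b) ^ 2 ∈ jacR R := by
      have : a * b - (a * b) ^ 2 = (a - a * b * a) * b := by ring
      rw [this]
      exact Ideal.mul_mem_right b _ h1
    obtain ⟨e, he, he2⟩ := hlift (a * b) hf
    have hj : a * b - e ∈ jacR R := by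
      have : a * b - e = -(e - a * b) := by ring
      rw [this]; exact neg_mem he2
    have hae : a - a * e ∈ jacR R := by
      have : a - a * e = (a - a * b * a) + a * (a * b - e) := by ring
      rw [this]
      exact Ideal.add_mem _ h1 (Ideal.mul_mem_left _ a hj)
    refine ⟨1 - e, e, by linear_combination - he, ?_, ?_⟩
    · -- comaximality
      have hu : IsUnit ((1 - e) + a * b) := by
        apply unit_of_sub_one_mem
        have : (1 - e) + a * b - 1 = a * b - e := by ring
        rw [this]; exact hj
      obtain ⟨c, hc⟩ := hu.exists_right_inv
      exact ⟨c, b * c, by linear_combination hc⟩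
    · rintro s' hdvd hnu ⟨x, y, hxy⟩
      obtain ⟨t, ht⟩ := hdvd
      apply hnu
      have key : s' * (x * (1 - e) + t) - 1 ∈ jacR R := by
        have heq : s' * (x * (1 - e) + t) - 1 = -(y * (a - a * e)) := by
          linear_combination (1 - e) * hxy - ht
        rw [heq]
        exact neg_mem (Ideal.mul_mem_left _ y hae)
      have hu : IsUnit (s' * (x * (1 - e) + t)) := by
        apply unit_of_sub_one_mem key
      exact isUnit_of_mul_isUnit_left hu
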